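/- For interlaced points −1 = μ_{1/2} < μ_1 < ... < μ_N < μ_{N+1/2} = 1 and φ(μ) = μ³, the centered-difference error satisfies E_n*(φ) = −(h*_n)² − 3(d*_n)² − 6 μ_n d*_n, where h*_n = (μ_{n+1/2} − μ_{n-1/2})/2 and d*_n = (μ_{n-1/2}+μ_{n+1/2})/2 − μ_n; consequently (M_N*)² ≤ 4·max_{1≤n≤N}|E_n*(φ)| + 24·D_N*, where M_N* = 2 max h*_n and D_N* = max |d*_n|. -/

import Mathlib

/-!
Expanding `b³ - a³` about the midpoint `c = (a + b)/2` with half-width `h = (b - a)/2` gives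
`(b³ - a³)/(b - a) = 3c² + h²`; writing `c = m + d` turns the error `3m² - (3c² + h²)` into
`-h² - 3d² - 6md`. Hence `(b - a)² = 4h² ≤ 4|E| + 24|m||d|`, and the interlacing condition keeps
every node `m = μ_n` inside `[-1, 1]`. Taking the maximum over the cell where `b - a` is largest
gives the bound on `(M_N*)²`.
-/

theorem cube_centered_difference_error {K : Type*} [Field K] [NeZero (2 : K)] {a b : K}
    (hab : a ≠ b) (m : K) :
    3 * m ^ 2 - (b ^ 3 - a ^ 3) / (b - a) =
      -((b - a) / 2) ^ 2 - 3 * ((a + b) / 2 - m) ^ 2 - 6 * m * ((a + b) / 2 - m) := by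
  have : b - a ≠ 0 := sub_ne_zero.mpr hab.symm
  field_simp
  ring

theorem sq_sub_le_of_cube_centered_difference_error {K : Type*} [Field K] [LinearOrder K]
    [IsStrictOrderedRing K] {a b m : K} (hab : a ≠ b) (hm : |m| ≤ 1) :
    (b - a) ^ 2 ≤
      4 * |3 * m ^ 2 - (b ^ 3 - a ^ 3) / (b - a)| + 24 * |(a + b) / 2 - m| := by
  rw [cube_centered_difference_error hab]
  set d := (a + b) / 2 - m
  have hmd : -(m * d) ≤ |d| := calc
    -(m * d) ≤ |m * d| := neg_le_abs _
    _ = |m| * |d| := abs_mul m d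
    _ ≤ |d| := mul_le_of_le_one_left (abs_nonneg d) hm
  have hE := neg_le_abs (-((b - a) / 2) ^ 2 - 3 * d ^ 2 - 6 * m * d)
  nlinarith [sq_nonneg d]

theorem monotoneOn_Iic_of_forall_mem_Icc_pred_le {α : Type*} [Preorder α] {p : ℕ → α} {N : ℕ}
    (hp : ∀ n ∈ Finset.Icc 1 N, p (n - 1) ≤ p n) : MonotoneOn p (Set.Iic N) := by
  intro k _ l hlN hkl
  induction l, hkl using Nat.le_induction with
  | base => exact le_rfl
  | succ l _ ih =>
    have hlN : l + 1 ≤ N := hlN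
    exact (ih (by simp; omega)).trans
      (by simpa using hp (l + 1) (Finset.mem_Icc.mpr ⟨by omega, hlN⟩))

theorem Finset.sq_sup'_le {ι : Type*} {s : Finset ι} (hs : s.Nonempty) {f g h : ι → ℝ}
    {A B : ℝ} (hA : 0 ≤ A) (hB : 0 ≤ B) (hfgh : ∀ i ∈ s, f i ^ 2 ≤ A * g i + B * h i) :
    s.sup' hs f ^ 2 ≤ A * s.sup' hs g + B * s.sup' hs h := by
  obtain ⟨i, hi, hfi⟩ := s.exists_mem_eq_sup' hs f
  rw [hfi]
  calc f i ^ 2 ≤ A * g i + B * h i := hfgh i hi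
    _ ≤ A * s.sup' hs g + B * s.sup' hs h := by
      gcongr
      · exact s.le_sup' g hi
      · exact s.le_sup' h hi

/-- for `φ(μ) = μ³`, the centered-difference error is exactly
`E_n* = −(h*_n)² − 3(d*_n)² − 6 μ_n d*_n`, and consequently
`(M_N*)² ≤ 4·max_n |E_n*| + 24·D_N*`. -/
theorem stmt19 (N : ℕ) (hN : 1 ≤ N) (μ p : ℕ → ℝ)
    (hp0 : p 0 = -1) (hpN : p N = 1)
    (hinter : ∀ n ∈ Finset.Icc 1 N, p (n - 1) < μ n ∧ μ n < p n) :
    (∀ n ∈ Finset.Icc 1 N,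
        3 * (μ n) ^ 2 - ((p n) ^ 3 - (p (n - 1)) ^ 3) / (p n - p (n - 1)) =
          -((p n - p (n - 1)) / 2) ^ 2 - 3 * ((p (n - 1) + p n) / 2 - μ n) ^ 2
            - 6 * μ n * ((p (n - 1) + p n) / 2 - μ n))
    ∧ ((Finset.Icc 1 N).sup' (Finset.nonempty_Icc.mpr hN) (fun n => p n - p (n - 1))) ^ 2
        ≤ 4 * (Finset.Icc 1 N).sup' (Finset.nonempty_Icc.mpr hN)
            (fun n => |3 * (μ n) ^ 2 - ((p n) ^ 3 - (p (n - 1)) ^ 3) / (p n - p (n - 1))|)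
          + 24 * (Finset.Icc 1 N).sup' (Finset.nonempty_Icc.mpr hN)
            (fun n => |(p (n - 1) + p n) / 2 - μ n|) := by
  have hlt : ∀ n ∈ Finset.Icc 1 N, p (n - 1) < p n := fun n hn =>
    (hinter n hn).1.trans (hinter n hn).2
  have hne : ∀ n ∈ Finset.Icc 1 N, p (n - 1) ≠ p n := fun n hn => (hlt n hn).ne
  have hmono := monotoneOn_Iic_of_forall_mem_Icc_pred_le fun n hn => (hlt n hn).le
  refine ⟨fun n hn => cube_centered_difference_error (hne n hn) (μ n),
    Finset.sq_sup'_le _ (by norm_num) (by norm_num) fun n hn => ?_⟩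
  have hnN : n ≤ N := (Finset.mem_Icc.mp hn).2
  have hlow : -1 ≤ p (n - 1) := hp0 ▸ hmono (Nat.zero_le N) (by simp; omega) (Nat.zero_le _)
  have hup : p n ≤ 1 := hpN ▸ hmono hnN (Set.mem_Iic.mpr le_rfl) hnN
  refine sq_sub_le_of_cube_centered_difference_error (hne n hn) (abs_le.mpr ⟨?_, ?_⟩)
  · linarith [(hinter n hn).1]
  · linarith [(hinter n hn).2]
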